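/- arXiv:2205.02325 — 6 statements merged into one kernel-verified Lean document; each statement's English description precedes it below -/
import Mathlib

section
/- Let 1 < α ≤ 2, 0 ≤ β ≤ α - 1, a < b. For a ≤ s ≤ t ≤ b define g₁(t,s) = (t-a)^(α-1)(b-s)^(α-1-β)/(b-a)^(α-1-β) - (t-s)^(α-1). Then g₁(t,s) ≥ 0. -/
theorem stmt_1 (α β a b s t : ℝ) (hα : 1 < α) (hα2 : α ≤ 2) (hβ : 0 ≤ β)
    (hβα : β ≤ α - 1) (hab : a < b) (has : a ≤ s) (hst : s ≤ t) (htb : t ≤ b) :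
    0 ≤ (t - a) ^ (α - 1) * (b - s) ^ (α - 1 - β) / (b - a) ^ (α - 1 - β) -
      (t - s) ^ (α - 1) := by
  have h1 : (0:ℝ) < b - a := by linarith
  have hta : (0:ℝ) ≤ t - a := by linarith
  have hts : (0:ℝ) ≤ t - s := by linarith
  have hbs : (0:ℝ) ≤ b - s := by linarith
  rw [sub_nonneg]
  rcases eq_or_lt_of_le (le_trans hst htb : s ≤ b) with hsb | hsb
  · -- s = b, so t = b, t - s = 0
    have htb' : t = b := le_antisymm htb (hsb ▸ hst)
    have hz : t - s = 0 := by rw [htb', ← hsb]; ring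
    rw [hz, Real.zero_rpow (by linarith : α - 1 ≠ 0)]
    positivity
  · have hc0 : 0 < (b - s) / (b - a) := div_pos (by linarith) h1
    have hc1 : (b - s) / (b - a) ≤ 1 := by
      rw [div_le_one h1]; linarith
    have key : t - s ≤ (t - a) * ((b - s) / (b - a)) := by
      rw [mul_div_assoc', le_div_iff₀ h1]
      nlinarith [mul_nonneg (sub_nonneg.2 has) (sub_nonneg.2 htb)]
    calc (t - s) ^ (α - 1) ≤ ((t - a) * ((b - s) / (b - a))) ^ (α - 1) :=
          Real.rpow_le_rpow hts key (by linarith)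
      _ = (t - a) ^ (α - 1) * ((b - s) / (b - a)) ^ (α - 1) :=
          Real.mul_rpow hta hc0.le
      _ ≤ (t - a) ^ (α - 1) * ((b - s) / (b - a)) ^ (α - 1 - β) :=
          mul_le_mul_of_nonneg_left
            (Real.rpow_le_rpow_of_exponent_ge hc0 hc1 (by linarith))
            (Real.rpow_nonneg hta _)
      _ = (t - a) ^ (α - 1) * (b - s) ^ (α - 1 - β) / (b - a) ^ (α - 1 - β) := by
          rw [Real.div_rpow hbs h1.le, mul_div_assoc]
end

section
/- Let 1 < α ≤ 2, 0 ≤ β ≤ α - 1, a < b. For fixed s ∈ [a,b], the function t ↦ (t-a)^(α-1)(b-s)^(α-1-β)/(b-a)^(α-1-β) - (t-s)^(α-1) is monotonically decreasing on [s,b]. -/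
/-!
Concavity of `x ↦ x ^ (α - 1)` on `[0, ∞)` means that its increments over an interval of fixed
length shrink as the interval moves right. For `s ≤ t ≤ t'` the increment of `(· - a) ^ (α - 1)`
over `[t, t']` is taken at the larger base `t - a ≥ t - s`, so it is at most the increment of
`(· - s) ^ (α - 1)`. Since that increment is nonnegative, multiplying it by the factor
`(b - s) ^ (α - 1 - β) / (b - a) ^ (α - 1 - β) ≤ 1` only shrinks it further.
-/

open Set

/-- Both `x + h` and `y` lie on the segment `[x, y + h]`, in mirrored positions. -/
theorem ConcaveOn.map_add_sub_map_le_of_le {𝕜 : Type*} [Field 𝕜] [LinearOrder 𝕜]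
    [IsStrictOrderedRing 𝕜] {s : Set 𝕜} {f : 𝕜 → 𝕜} {x y h : 𝕜} (hf : ConcaveOn 𝕜 s f)
    (hx : x ∈ s) (hyh : y + h ∈ s) (hxy : x ≤ y) (hh : 0 ≤ h) :
    f (y + h) - f y ≤ f (x + h) - f x := by
  rcases (show x ≤ y + h by linarith).eq_or_lt with heq | hlt
  · obtain ⟨rfl, rfl⟩ : y = x ∧ h = 0 := ⟨by linarith, by linarith⟩
    simp
  have hd : 0 < y + h - x := sub_pos.2 hlt
  have hsum : (y - x) / (y + h - x) + h / (y + h - x) = 1 := by field_simp; ring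
  have hwx : 0 ≤ (y - x) / (y + h - x) := div_nonneg (sub_nonneg.2 hxy) hd.le
  have hwh : 0 ≤ h / (y + h - x) := div_nonneg hh hd.le
  have exh : ((y - x) / (y + h - x)) • x + (h / (y + h - x)) • (y + h) = x + h := by
    simp only [smul_eq_mul]; field_simp; ring
  have ey : (h / (y + h - x)) • x + ((y - x) / (y + h - x)) • (y + h) = y := by
    simp only [smul_eq_mul]; field_simp; ring
  have hxh := hf.2 hx hyh hwx hwh hsum
  have hy := hf.2 hx hyh hwh hwx (by rw [add_comm, hsum])
  rw [exh] at hxh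
  rw [ey] at hy
  simp only [smul_eq_mul] at hxh hy
  linear_combination hxh + hy - (f x + f (y + h)) * hsum

theorem antitoneOn_mul_map_sub_sub_map_sub {f : ℝ → ℝ} (hconc : ConcaveOn ℝ (Ici 0) f)
    (hmono : MonotoneOn f (Ici 0)) {a s c : ℝ} (has : a ≤ s) (hc : c ≤ 1) :
    AntitoneOn (fun t => c * f (t - a) - f (t - s)) (Ici s) := by
  intro t ht t' ht' htt'
  have hts : 0 ≤ t - s := sub_nonneg.2 ht
  have hta : t - s ≤ t - a := by linarith
  have hinc_nonneg : 0 ≤ f (t' - a) - f (t - a) :=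
    sub_nonneg.2 (hmono (mem_Ici.2 (by linarith)) (mem_Ici.2 (by linarith)) (by linarith))
  have hinc_le : f (t' - a) - f (t - a) ≤ f (t' - s) - f (t - s) := by
    have := hconc.map_add_sub_map_le_of_le (x := t - s) (y := t - a) (h := t' - t) hts
      (mem_Ici.2 (by linarith)) hta (by linarith)
    simpa only [show t - a + (t' - t) = t' - a by ring, show t - s + (t' - t) = t' - s by ring]
      using this
  dsimp only
  linear_combination mul_le_of_le_one_left hinc_nonneg hc + hinc_le

theorem stmt_2_general (α β a b s : ℝ) (hα : 1 < α) (hα2 : α ≤ 2)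
    (hβα : β ≤ α - 1) (hs : s ∈ Set.Icc a b) :
    AntitoneOn (fun t : ℝ =>
      (t - a) ^ (α - 1) * (b - s) ^ (α - 1 - β) / (b - a) ^ (α - 1 - β) -
        (t - s) ^ (α - 1)) (Set.Icc s b) := by
  obtain ⟨has, hsb⟩ := hs
  have hγ : 0 ≤ α - 1 := by linarith
  have hδ : 0 ≤ α - 1 - β := by linarith
  set c := (b - s) ^ (α - 1 - β) / (b - a) ^ (α - 1 - β)
  have hc : c ≤ 1 :=
    div_le_one_of_le₀ (Real.rpow_le_rpow (by linarith) (by linarith) hδ)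
      (Real.rpow_nonneg (by linarith) _)
  have key := antitoneOn_mul_map_sub_sub_map_sub (Real.concaveOn_rpow hγ (by linarith))
    (Real.monotoneOn_rpow_Ici_of_exponent_nonneg hγ) has hc
  refine (key.mono Icc_subset_Ici_self).congr fun t _ => ?_
  simp only [c]
  ring

theorem stmt_2 (α β a b s : ℝ) (hα : 1 < α) (hα2 : α ≤ 2) (hβ : 0 ≤ β)
    (hβα : β ≤ α - 1) (hab : a < b) (hs : s ∈ Set.Icc a b) :
    AntitoneOn (fun t : ℝ =>
      (t - a) ^ (α - 1) * (b - s) ^ (α - 1 - β) / (b - a) ^ (α - 1 - β) -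
        (t - s) ^ (α - 1)) (Set.Icc s b) :=
  stmt_2_general α β a b s hα hα2 hβα hs
end

section
/- Let 1 < α ≤ 2, 0 ≤ β < α - 1, a < b. Define g(s) = (s-a)^(α-1)(b-s)^(α-1-β) / ((b-a)^(α-1-β) Γ(α)) for s ∈ [a,b]. Then g attains its maximum on [a,b] uniquely at s* = ((α-1)b + (α-1-β)a)/(2α-2-β), and g(s*) = (1/Γ(α)) · ((b-a)(α-1)/(2α-2-β))^(α-1) · ((α-1-β)/(2α-2-β))^(α-1-β). -/
/-! With `x = s - a` and `y = b - s` the sum `x + y = b - a` is fixed, and weighted AM-GM with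
weights `α - 1` and `α - 1 - β` shows that `x ^ (α - 1) * y ^ (α - 1 - β)` is largest exactly when
`x / (α - 1) = y / (α - 1 - β)`, that is at `s = s₀`. -/

open Real Set

lemma rpow_mul_rpow_lt_of_mul_ne {p q x y : ℝ} (hp : 0 < p) (hq : 0 < q) (hx : 0 ≤ x) (hy : 0 ≤ y)
    (hne : q * x ≠ p * y) :
    x ^ p * y ^ q < (p * ((x + y) / (p + q))) ^ p * (q * ((x + y) / (p + q))) ^ q := by
  have hpq : 0 < p + q := add_pos hp hq
  set m := (x + y) / (p + q)
  have hxy : 0 < x + y := by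
    refine lt_of_le_of_ne (add_nonneg hx hy) fun h => hne ?_
    obtain ⟨rfl, rfl⟩ : x = 0 ∧ y = 0 := by constructor <;> linarith
    simp
  have hm : 0 < m := div_pos hxy hpq
  have hamgm : (x / (p * m)) ^ (p / (p + q)) * (y / (q * m)) ^ (q / (p + q)) < 1 := by
    have hw : p / (p + q) + q / (p + q) = 1 := by field_simp
    have hX : x / (p * m) ≠ y / (q * m) := by
      intro h
      rw [div_eq_div_iff (by positivity) (by positivity)] at h
      exact hne (mul_right_cancel₀ hm.ne' (by linarith))
    -- the weighted arithmetic mean of `x / (p * m)` and `y / (q * m)` is `1`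
    convert (geom_mean_lt_arith_mean2_weighted_iff_of_pos (div_pos hp hpq) (div_pos hq hpq)
      (by positivity) (by positivity) hw).2 hX using 1
    simp only [m]
    field_simp
  have hpow : (x / (p * m)) ^ p * (y / (q * m)) ^ q < 1 := by
    have := rpow_lt_rpow (by positivity) hamgm hpq
    rwa [one_rpow, mul_rpow (by positivity) (by positivity), ← rpow_mul (by positivity),
      ← rpow_mul (by positivity), div_mul_cancel₀ _ hpq.ne', div_mul_cancel₀ _ hpq.ne'] at this
  calc x ^ p * y ^ q
      = (p * m) ^ p * (q * m) ^ q * ((x / (p * m)) ^ p * (y / (q * m)) ^ q) := by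
        rw [div_rpow hx (by positivity), div_rpow hy (by positivity)]
        field_simp
    _ < (p * m) ^ p * (q * m) ^ q := mul_lt_of_lt_one_right (by positivity) hpow

section WeightedPoint

variable {p q a b : ℝ}

lemma mul_add_mul_div_add_sub (hpq : p + q ≠ 0) :
    (p * b + q * a) / (p + q) - a = p * ((b - a) / (p + q)) := by
  field_simp
  ring

lemma sub_mul_add_mul_div_add (hpq : p + q ≠ 0) :
    b - (p * b + q * a) / (p + q) = q * ((b - a) / (p + q)) := by
  field_simp
  ring

lemma mul_add_mul_div_add_mem_Icc (hp : 0 ≤ p) (hq : 0 ≤ q) (hpq : 0 < p + q) (hab : a ≤ b) :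
    (p * b + q * a) / (p + q) ∈ Icc a b := by
  have hm : 0 ≤ (b - a) / (p + q) := div_nonneg (sub_nonneg.2 hab) hpq.le
  constructor
  · rw [← sub_nonneg, mul_add_mul_div_add_sub hpq.ne']
    exact mul_nonneg hp hm
  · rw [← sub_nonneg, sub_mul_add_mul_div_add hpq.ne']
    exact mul_nonneg hq hm

lemma sub_rpow_mul_sub_rpow_lt_of_ne (hp : 0 < p) (hq : 0 < q) {s : ℝ} (hs : s ∈ Icc a b)
    (hne : s ≠ (p * b + q * a) / (p + q)) :
    (s - a) ^ p * (b - s) ^ q <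
      ((p * b + q * a) / (p + q) - a) ^ p * (b - (p * b + q * a) / (p + q)) ^ q := by
  have hpq : 0 < p + q := add_pos hp hq
  have hsum : (s - a) + (b - s) = b - a := by ring
  rw [mul_add_mul_div_add_sub hpq.ne', sub_mul_add_mul_div_add hpq.ne', ← hsum]
  refine rpow_mul_rpow_lt_of_mul_ne hp hq (sub_nonneg.2 hs.1) (sub_nonneg.2 hs.2) fun h => hne ?_
  rw [eq_div_iff hpq.ne']
  linarith

end WeightedPoint

theorem stmt_4_general (α β a b : ℝ) (hα : 1 < α) (hβα : β < α - 1) (hab : a < b)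
    (g : ℝ → ℝ)
    (hg : ∀ s, g s = (s - a) ^ (α - 1) * (b - s) ^ (α - 1 - β) /
      ((b - a) ^ (α - 1 - β) * Real.Gamma α)) :
    let s₀ := ((α - 1) * b + (α - 1 - β) * a) / (2 * α - 2 - β)
    s₀ ∈ Set.Icc a b ∧
      (∀ s ∈ Set.Icc a b, s ≠ s₀ → g s < g s₀) ∧
      g s₀ = (1 / Real.Gamma α) *
        ((b - a) * (α - 1) / (2 * α - 2 - β)) ^ (α - 1) *
        ((α - 1 - β) / (2 * α - 2 - β)) ^ (α - 1 - β) := by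
  have hp : 0 < α - 1 := by linarith
  have hq : 0 < α - 1 - β := by linarith
  have hpq : 2 * α - 2 - β = (α - 1) + (α - 1 - β) := by ring
  have hden : 0 < (b - a) ^ (α - 1 - β) * Gamma α :=
    mul_pos (rpow_pos_of_pos (sub_pos.2 hab) _) (Gamma_pos_of_pos (by linarith))
  simp only [hpq]
  refine ⟨mul_add_mul_div_add_mem_Icc hp.le hq.le (add_pos hp hq) hab.le, fun s hs hne => ?_, ?_⟩
  · rw [hg, hg, div_lt_div_iff_of_pos_right hden]
    exact sub_rpow_mul_sub_rpow_lt_of_ne hp hq hs hne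
  · have hba : 0 < b - a := sub_pos.2 hab
    set D := α - 1 + (α - 1 - β)
    have hD : D ≠ 0 := (add_pos hp hq).ne'
    have hleft : (α - 1) * ((b - a) / D) = (b - a) * (α - 1) / D := by ring
    have hright : (α - 1 - β) * ((b - a) / D) = (b - a) * ((α - 1 - β) / D) := by ring
    rw [hg, mul_add_mul_div_add_sub hD, sub_mul_add_mul_div_add hD, hleft, hright,
      mul_rpow hba.le (by positivity)]
    field_simp

theorem stmt_4 (α β a b : ℝ) (hα : 1 < α) (hα2 : α ≤ 2) (hβ : 0 ≤ β)
    (hβα : β < α - 1) (hab : a < b)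
    (g : ℝ → ℝ)
    (hg : ∀ s, g s = (s - a) ^ (α - 1) * (b - s) ^ (α - 1 - β) /
      ((b - a) ^ (α - 1 - β) * Real.Gamma α)) :
    let s₀ := ((α - 1) * b + (α - 1 - β) * a) / (2 * α - 2 - β)
    s₀ ∈ Set.Icc a b ∧
      (∀ s ∈ Set.Icc a b, s ≠ s₀ → g s < g s₀) ∧
      g s₀ = (1 / Real.Gamma α) *
        ((b - a) * (α - 1) / (2 * α - 2 - β)) ^ (α - 1) *
        ((α - 1 - β) / (2 * α - 2 - β)) ^ (α - 1 - β) :=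
  stmt_4_general α β a b hα hβα hab g hg
end

section
/- Let 1 < α ≤ 2, 0 ≤ β ≤ α - 1, a < b, and fix t ∈ [a,b]. Then ∫ₐᵇ G(t,s) ds = ((t-a)^(α-1)/Γ(α+1)) · (α/(α-β)·(b-a) - (t-a)), where G(t,s) = (1/Γ(α))·[(t-a)^(α-1)(b-s)^(α-1-β)/(b-a)^(α-1-β) - max(t-s,0)^(α-1)] with the convention that the second term is present only for s ≤ t. -/
noncomputable def G (a b α β t s : ℝ) : ℝ :=
  if s ≤ t then
    (1 / Real.Gamma α) *
      ((t - a) ^ (α - 1) * (b - s) ^ (α - 1 - β) / (b - a) ^ (α - 1 - β) -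
        (t - s) ^ (α - 1))
  else
    (1 / Real.Gamma α) *
      ((t - a) ^ (α - 1) * (b - s) ^ (α - 1 - β) / (b - a) ^ (α - 1 - β))

theorem stmt_6 (α β a b t : ℝ) (hα : 1 < α) (hα2 : α ≤ 2) (hβ : 0 ≤ β)
    (hβα : β ≤ α - 1) (hab : a < b) (ht : t ∈ Set.Icc a b) :
    ∫ s in a..b, G a b α β t s =
      (t - a) ^ (α - 1) / Real.Gamma (α + 1) *
        (α / (α - β) * (b - a) - (t - a)) := by
  obtain ⟨hta, htb⟩ := ht
  have hba : (0:ℝ) < b - a := by linarith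
  have hta' : (0:ℝ) ≤ t - a := by linarith
  have hΓ : 0 < Real.Gamma α := Real.Gamma_pos_of_pos (by linarith)
  have hγ : (0:ℝ) ≤ α - 1 - β := by linarith
  have hαβ : (0:ℝ) < α - β := by linarith
  set c := Real.Gamma α with hc
  -- continuity
  have hcont2 : Continuous fun s : ℝ => (t - s) ^ (α - 1) := by
    have h1 : Continuous fun y : ℝ => y ^ (α - 1) :=
      continuous_iff_continuousAt.2 fun x =>
        Real.continuousAt_rpow_const x _ (Or.inr (by linarith))
    exact h1.comp (continuous_const.sub continuous_id)
  have hcont1 : Continuous fun s : ℝ => (b - s) ^ (α - 1 - β) := by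
    have h1 : Continuous fun y : ℝ => y ^ (α - 1 - β) :=
      continuous_iff_continuousAt.2 fun x =>
        Real.continuousAt_rpow_const x _ (Or.inr hγ)
    exact h1.comp (continuous_const.sub continuous_id)
  have hG : ∀ s, G a b α β t s =
      (1 / c) * ((t - a) ^ (α - 1) / (b - a) ^ (α - 1 - β)) * (b - s) ^ (α - 1 - β)
        - Set.indicator {s : ℝ | s ≤ t} (fun s => (1 / c) * (t - s) ^ (α - 1)) s := by
    intro s
    unfold G
    by_cases hs : s ≤ t
    · simp only [if_pos hs, Set.indicator_apply, Set.mem_setOf_eq]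
      ring
    · simp only [if_neg hs, Set.indicator_apply, Set.mem_setOf_eq]
      ring
  have hint1 : IntervalIntegrable
      (fun s => (1 / c) * ((t - a) ^ (α - 1) / (b - a) ^ (α - 1 - β)) * (b - s) ^ (α - 1 - β))
      MeasureTheory.volume a b := (continuous_const.mul hcont1).intervalIntegrable a b
  have hint2 : IntervalIntegrable
      (Set.indicator {s : ℝ | s ≤ t} fun s => (1 / c) * (t - s) ^ (α - 1))
      MeasureTheory.volume a b := by
    rw [intervalIntegrable_iff]
    have : MeasureTheory.IntegrableOn (fun s => (1 / c) * (t - s) ^ (α - 1))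
        (Set.uIoc a b) MeasureTheory.volume :=
      (continuous_const.mul hcont2).integrableOn_uIoc
    exact this.indicator measurableSet_Iic
  rw [intervalIntegral.integral_congr (fun s _ => hG s),
    intervalIntegral.integral_sub hint1 hint2,
    intervalIntegral.integral_indicator (Set.mem_Icc.2 ⟨hta, htb⟩),
    intervalIntegral.integral_const_mul, intervalIntegral.integral_const_mul]
  have e1 : ∫ s in a..b, (b - s) ^ (α - 1 - β) = (b - a) ^ (α - β) / (α - β) := by
    rw [intervalIntegral.integral_comp_sub_left (fun x => x ^ (α - 1 - β)) b]
    rw [integral_rpow (Or.inl (by linarith : (-1:ℝ) < α - 1 - β))]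
    rw [sub_self, Real.zero_rpow (by linarith)]
    ring_nf
  have e2 : ∫ s in a..t, (t - s) ^ (α - 1) = (t - a) ^ α / α := by
    rw [intervalIntegral.integral_comp_sub_left (fun x => x ^ (α - 1)) t]
    rw [integral_rpow (Or.inl (by linarith : (-1:ℝ) < α - 1))]
    rw [sub_self, Real.zero_rpow (by linarith)]
    ring_nf
  rw [e1, e2, Real.Gamma_add_one (by linarith : α ≠ 0), ← hc]
  have hbγ : (0:ℝ) < (b - a) ^ (α - 1 - β) := Real.rpow_pos_of_pos hba _
  rcases eq_or_lt_of_le hta' with h0 | h0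
  · rw [← h0]
    rw [Real.zero_rpow (by linarith : α - 1 ≠ 0), Real.zero_rpow (by linarith : α ≠ 0)]
    simp
  · have hpow : (b - a) ^ (α - β) = (b - a) ^ (α - 1 - β) * (b - a) := by
      rw [show α - β = (α - 1 - β) + 1 by ring, Real.rpow_add_one (ne_of_gt hba)]
    have hpow2 : (t - a) ^ α = (t - a) ^ (α - 1) * (t - a) := by
      rw [show α = (α - 1) + 1 by ring, Real.rpow_add_one (ne_of_gt h0)]
      ring_nf
    rw [hpow, hpow2]
    field_simp
end

section
/- Let 1 < α ≤ 2, 0 ≤ β ≤ α - 1, a < b. Define f(t) = ((t-a)^(α-1)/Γ(α+1)) · (α/(α-β)·(b-a) - (t-a)) for t ∈ [a,b]. Then max over t ∈ [a,b] of f(t) equals (α-1)^(α-1)/((α-β)^α Γ(α+1)) · (b-a)^α, attained at t* = a + (α-1)/(α-β)·(b-a). -/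
/-!
Writing `x = t - a` and `c = α / (α - β) * (b - a)`, the function is
`x ^ (α - 1) * (c - x) / Γ(α + 1)`. By weighted AM-GM with weights `p / (p + 1)` and `1 / (p + 1)`, the product `x ^ p * (c - x)` on
`x ≥ 0` is largest at `x = p / (p + 1) * c`; for `p = α - 1` this is `t₀ - a`, which lies in
`[0, b - a]` because `β ≤ α - 1 ≤ 1`.
-/

open Real

lemma rpow_mul_sub_le {p c x : ℝ} (hp : 0 < p) (hc : 0 < c) (hx : 0 ≤ x) :
    x ^ p * (c - x) ≤ (p / (p + 1) * c) ^ p * (c - p / (p + 1) * c) := by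
  have hp1 : 0 < p + 1 := by linarith
  set x₀ := p / (p + 1) * c with hx₀
  set y₀ := c - x₀ with hy₀
  have hx₀_pos : 0 < x₀ := by positivity
  have hy₀_eq : y₀ = c / (p + 1) := by rw [hy₀, hx₀]; field_simp; ring
  have hy₀_pos : 0 < y₀ := by rw [hy₀_eq]; positivity
  rcases lt_or_ge c x with hcx | hxc
  · have : x ^ p * (c - x) ≤ 0 :=
      mul_nonpos_of_nonneg_of_nonpos (by positivity) (by linarith)
    exact this.trans (by positivity)
  have hy : 0 ≤ (c - x) / y₀ := div_nonneg (sub_nonneg.2 hxc) hy₀_pos.le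
  have hgm := geom_mean_le_arith_mean2_weighted (by positivity : 0 ≤ p / (p + 1))
    (by positivity : 0 ≤ 1 / (p + 1)) (by positivity : 0 ≤ x / x₀) hy (by field_simp)
  have hsum : p / (p + 1) * (x / x₀) + 1 / (p + 1) * ((c - x) / y₀) = 1 := by
    rw [hy₀_eq, hx₀]; field_simp; ring
  rw [hsum] at hgm
  -- raising the AM-GM inequality to the power `p + 1` clears the weights
  have hpow := rpow_le_one (by positivity) hgm hp1.le
  rw [mul_rpow (by positivity) (rpow_nonneg hy _), ← rpow_mul (by positivity), ← rpow_mul hy,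
    div_mul_cancel₀ _ hp1.ne', one_div_mul_cancel hp1.ne', rpow_one, div_rpow hx hx₀_pos.le,
    div_mul_div_comm, div_le_one (by positivity)] at hpow
  exact hpow

lemma div_mul_rpow_mul_div_eq {k s L q : ℝ} (hk : 0 ≤ k) (hs : 0 < s) (hL : 0 < L) :
    (k / s * L) ^ q * (L / s) = k ^ q / s ^ (q + 1) * L ^ (q + 1) := by
  rw [mul_rpow (by positivity) hL.le, div_rpow hk hs.le, rpow_add_one hs.ne',
    rpow_add_one hL.ne']
  field_simp

theorem stmt_7_general (α β a b : ℝ) (hα : 1 < α) (hα2 : α ≤ 2)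
    (hβα : β ≤ α - 1) (hab : a < b)
    (f : ℝ → ℝ)
    (hf : ∀ t, f t = (t - a) ^ (α - 1) / Real.Gamma (α + 1) *
      (α / (α - β) * (b - a) - (t - a))) :
    let t₀ := a + (α - 1) / (α - β) * (b - a)
    t₀ ∈ Set.Icc a b ∧
      f t₀ = (α - 1) ^ (α - 1) / ((α - β) ^ α * Real.Gamma (α + 1)) *
        (b - a) ^ α ∧
      ∀ t ∈ Set.Icc a b, f t ≤ f t₀ := by
  intro t₀
  have hL : 0 < b - a := sub_pos.2 hab
  have hαβ : 0 < α - β := by linarith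
  have hα1 : 0 < α - 1 := sub_pos.2 hα
  have hΓ : 0 < Gamma (α + 1) := Gamma_pos_of_pos (by linarith)
  set c := α / (α - β) * (b - a) with hc
  have ht₀ : t₀ - a = (α - 1) / (α - β) * (b - a) := by ring
  have ht₀_max : t₀ - a = (α - 1) / (α - 1 + 1) * c := by
    rw [ht₀, hc, sub_add_cancel]; field_simp [hα1.ne']
  have hc_t₀ : c - (t₀ - a) = (b - a) / (α - β) := by rw [ht₀, hc]; field_simp; ring
  refine ⟨⟨?_, ?_⟩, ?_, fun t ht => ?_⟩
  · have : 0 ≤ (α - 1) / (α - β) * (b - a) := by positivity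
    linarith [ht₀]
  · have : (α - 1) / (α - β) ≤ 1 := (div_le_one hαβ).2 (by linarith)
    nlinarith [ht₀]
  · rw [hf, hc_t₀, ht₀, div_mul_eq_mul_div, div_mul_rpow_mul_div_eq hα1.le hαβ hL,
      sub_add_cancel]
    field_simp
  · rw [hf, hf, div_mul_eq_mul_div, div_mul_eq_mul_div, ht₀_max]
    exact div_le_div_of_nonneg_right (rpow_mul_sub_le hα1 (by positivity) (sub_nonneg.2 ht.1))
      hΓ.le

theorem stmt_7 (α β a b : ℝ) (hα : 1 < α) (hα2 : α ≤ 2) (hβ : 0 ≤ β)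
    (hβα : β ≤ α - 1) (hab : a < b)
    (f : ℝ → ℝ)
    (hf : ∀ t, f t = (t - a) ^ (α - 1) / Real.Gamma (α + 1) *
      (α / (α - β) * (b - a) - (t - a))) :
    let t₀ := a + (α - 1) / (α - β) * (b - a)
    t₀ ∈ Set.Icc a b ∧
      f t₀ = (α - 1) ^ (α - 1) / ((α - β) ^ α * Real.Gamma (α + 1)) *
        (b - a) ^ α ∧
      ∀ t ∈ Set.Icc a b, f t ≤ f t₀ :=
  stmt_7_general α β a b hα hα2 hβα hab f hf
end

section
/- Let 1 < α ≤ 2, 0 ≤ β < α - 1, a < b. For all s, t ∈ [a,b], the Green's function G(t,s) satisfies 0 ≤ G(t,s) ≤ G(s,s) ≤ (1/Γ(α)) · ((b-a)(α-1)/(2α-2-β))^(α-1) · ((α-1-β)/(2α-2-β))^(α-1-β). -/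
/-!
Write `p = α - 1 ∈ (0, 1]`, `q = α - 1 - β ∈ (0, p]` and `c = ((b - s) / (b - a)) ^ q ∈ [0, 1]`,
so that `Γ(α) G(t, s) = (t - a) ^ p c - (t - s) ^ p` for `s ≤ t` and `(t - a) ^ p c` for `t < s`.
Nonnegativity comes from `t - s ≤ (t - a)(b - s)/(b - a)` together with `q ≤ p`. For `s ≤ t`,
subadditivity of `x ↦ x ^ p` gives `(t - a) ^ p ≤ (s - a) ^ p + (t - s) ^ p`, and `c ≤ 1` absorbs
the extra term, whence `G(t, s) ≤ G(s, s)`; for `t < s` this is monotonicity in `t`. Finally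
`Γ(α) G(s, s) (b - a) ^ q = (s - a) ^ p (b - s) ^ q`, whose maximum under `(s - a) + (b - s) = b - a`
is given by weighted AM-GM.
-/

open Real Set

theorem Real.rpow_mul_rpow_le_of_nonneg {p q x y : ℝ} (hp : 0 < p) (hq : 0 < q) (hx : 0 ≤ x)
    (hy : 0 ≤ y) :
    x ^ p * y ^ q ≤ ((x + y) * (p / (p + q))) ^ p * ((x + y) * (q / (p + q))) ^ q := by
  have huv : p / (p + q) + q / (p + q) = 1 := by field_simp
  set u := p / (p + q)
  set v := q / (p + q)
  have hu : 0 < u := by positivity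
  have hv : 0 < v := by positivity
  have hup : u * (p + q) = p := div_mul_cancel₀ p (by positivity)
  have hvq : v * (p + q) = q := div_mul_cancel₀ q (by positivity)
  have amgm : (x / u) ^ u * (y / v) ^ v ≤ x + y := by
    have := geom_mean_le_arith_mean2_weighted hu.le hv.le (div_nonneg hx hu.le)
      (div_nonneg hy hv.le) huv
    rwa [mul_div_cancel₀ x hu.ne', mul_div_cancel₀ y hv.ne'] at this
  have amgm_pow : (x / u) ^ p * (y / v) ^ q ≤ (x + y) ^ (p + q) := by
    have := rpow_le_rpow (by positivity) amgm (by positivity : 0 ≤ p + q)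
    rwa [mul_rpow (by positivity) (by positivity), ← rpow_mul (div_nonneg hx hu.le),
      ← rpow_mul (div_nonneg hy hv.le), hup, hvq] at this
  calc x ^ p * y ^ q = (x / u) ^ p * (y / v) ^ q * (u ^ p * v ^ q) := by
        rw [div_rpow hx hu.le, div_rpow hy hv.le]
        field_simp
    _ ≤ (x + y) ^ (p + q) * (u ^ p * v ^ q) := by gcongr
    _ = ((x + y) * u) ^ p * ((x + y) * v) ^ q := by
        rw [mul_rpow (by positivity) hu.le, mul_rpow (by positivity) hv.le,
          rpow_add' (by positivity) (add_pos hp hq).ne']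
        ring

theorem sub_rpow_le_rpow_mul_div_rpow {a b s t p q : ℝ} (hq : 0 ≤ q) (hqp : q ≤ p) (hab : a < b)
    (has : a ≤ s) (hst : s ≤ t) (htb : t ≤ b) :
    (t - s) ^ p ≤ (t - a) ^ p * (b - s) ^ q / (b - a) ^ q := by
  have hba : 0 < b - a := by linarith
  have hr0 : 0 ≤ (b - s) / (b - a) := div_nonneg (by linarith) hba.le
  have hr1 : (b - s) / (b - a) ≤ 1 := (div_le_one hba).2 (by linarith)
  have hlin : t - s ≤ (t - a) * ((b - s) / (b - a)) := by
    rw [← mul_div_assoc, le_div_iff₀ hba]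
    nlinarith
  calc (t - s) ^ p ≤ ((t - a) * ((b - s) / (b - a))) ^ p :=
        rpow_le_rpow (by linarith) hlin (hq.trans hqp)
    _ = (t - a) ^ p * ((b - s) / (b - a)) ^ p := mul_rpow (by linarith) hr0
    _ ≤ (t - a) ^ p * ((b - s) / (b - a)) ^ q := by
        gcongr ?_ * ?_
        · exact rpow_nonneg (by linarith) p
        · exact rpow_le_rpow_of_exponent_ge' hr0 hr1 hq hqp
    _ = (t - a) ^ p * (b - s) ^ q / (b - a) ^ q := by
        rw [div_rpow (by linarith) hba.le, mul_div_assoc]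

section Green

variable {a b α β s t : ℝ}

theorem G_self (hα : 1 < α) :
    G a b α β s s =
      1 / Gamma α * ((s - a) ^ (α - 1) * (b - s) ^ (α - 1 - β) / (b - a) ^ (α - 1 - β)) := by
  rw [G, if_pos le_rfl, sub_self, zero_rpow (by linarith), sub_zero]

theorem G_nonneg (hβ : 0 ≤ β) (hβα : β ≤ α - 1) (hab : a < b) (hs : s ∈ Icc a b)
    (ht : t ∈ Icc a b) : 0 ≤ G a b α β t s := by
  have hΓ : 0 ≤ 1 / Gamma α := one_div_nonneg.2 (Gamma_pos_of_pos (by linarith)).le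
  rw [G]
  split_ifs with hst
  · exact mul_nonneg hΓ <| sub_nonneg.2 <|
      sub_rpow_le_rpow_mul_div_rpow (by linarith) (by linarith) hab hs.1 hst ht.2
  · exact mul_nonneg hΓ <| div_nonneg
      (mul_nonneg (rpow_nonneg (by linarith [ht.1]) _) (rpow_nonneg (by linarith [hs.2]) _))
      (rpow_nonneg (by linarith) _)

theorem G_le_G_self (hα : 1 < α) (hα2 : α ≤ 2) (hβα : β ≤ α - 1) (hab : a < b)
    (hs : s ∈ Icc a b) (ht : t ∈ Icc a b) : G a b α β t s ≤ G a b α β s s := by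
  have hΓ : 0 ≤ 1 / Gamma α := one_div_nonneg.2 (Gamma_pos_of_pos (by linarith)).le
  have hba : 0 < (b - a) ^ (α - 1 - β) := rpow_pos_of_pos (by linarith) _
  set c := (b - s) ^ (α - 1 - β) / (b - a) ^ (α - 1 - β)
  have hc0 : 0 ≤ c := div_nonneg (rpow_nonneg (by linarith [hs.2]) _) hba.le
  have hc1 : c ≤ 1 := (div_le_one hba).2 <|
    rpow_le_rpow (by linarith [hs.2]) (by linarith [hs.1]) (by linarith)
  rw [G_self hα, G]
  split_ifs with hst
  · gcongr 1 / Gamma α * ?_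
    have hsub : (t - a) ^ (α - 1) ≤ (s - a) ^ (α - 1) + (t - s) ^ (α - 1) := by
      simpa using rpow_add_le_add_rpow (by linarith [hs.1] : 0 ≤ s - a)
        (by linarith : 0 ≤ t - s) (by linarith) (by linarith)
    have hts : (t - s) ^ (α - 1) * c ≤ (t - s) ^ (α - 1) :=
      mul_le_of_le_one_right (rpow_nonneg (by linarith) _) hc1
    have hsub_c := mul_le_mul_of_nonneg_right hsub hc0
    rw [add_mul] at hsub_c
    rw [mul_div_assoc, mul_div_assoc]
    linarith
  · gcongr
    · exact rpow_nonneg (by linarith [hs.2]) _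
    · linarith [ht.1]
    · exact (not_le.1 hst).le

theorem G_self_le (hα : 1 < α) (hβα : β < α - 1) (hab : a < b) (hs : s ∈ Icc a b) :
    G a b α β s s ≤ 1 / Gamma α * ((b - a) * (α - 1) / (2 * α - 2 - β)) ^ (α - 1) *
      ((α - 1 - β) / (2 * α - 2 - β)) ^ (α - 1 - β) := by
  have hba : 0 < (b - a) ^ (α - 1 - β) := rpow_pos_of_pos (by linarith) _
  have amgm := rpow_mul_rpow_le_of_nonneg (by linarith : 0 < α - 1) (by linarith : 0 < α - 1 - β)
    (by linarith [hs.1] : 0 ≤ s - a) (by linarith [hs.2] : 0 ≤ b - s)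
  have hsum : α - 1 + (α - 1 - β) = 2 * α - 2 - β := by ring
  rw [sub_add_sub_cancel', hsum, mul_rpow (x := b - a) (by linarith)
    (div_nonneg (by linarith) (by linarith) : 0 ≤ (α - 1 - β) / (2 * α - 2 - β)),
    ← mul_div_assoc] at amgm
  have hΓ : 0 < 1 / Gamma α := one_div_pos.2 (Gamma_pos_of_pos (by linarith))
  rw [G_self hα, mul_assoc, mul_le_mul_iff_right₀ hΓ, div_le_iff₀ hba]
  linarith

end Green

theorem stmt_9 (α β a b : ℝ) (hα : 1 < α) (hα2 : α ≤ 2) (hβ : 0 ≤ β)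
    (hβα : β < α - 1) (hab : a < b) :
    ∀ s ∈ Set.Icc a b, ∀ t ∈ Set.Icc a b,
      0 ≤ G a b α β t s ∧ G a b α β t s ≤ G a b α β s s ∧
        G a b α β s s ≤ (1 / Real.Gamma α) *
          ((b - a) * (α - 1) / (2 * α - 2 - β)) ^ (α - 1) *
          ((α - 1 - β) / (2 * α - 2 - β)) ^ (α - 1 - β) := by
  intro s hs t ht
  exact ⟨G_nonneg hβ hβα.le hab hs ht, G_le_G_self hα hα2 hβα.le hab hs ht,
    G_self_le hα hβα hab hs⟩
end
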